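/- (Critical Hardy with logarithmic weight) Let d ≥ 3 and α = (d-2)/2. Then for every compactly supported smooth radial f, ∫₁^∞ |∂_y f|² y^{d-1-2α} dy ≥ (1/4) ∫₁^∞ f² y^{d-3-2α} (1 + log y)^{-2} dy - C(d) f(1)². -/

import Mathlib

open MeasureTheory Set Filter Real

private lemma aux_int14 {g : ℝ → ℝ} (hg : ContinuousOn g (Set.Ici 1)) {M : ℝ}
    (hM : 1 ≤ M) (h0 : ∀ y, M ≤ y → g y = 0) : IntegrableOn g (Set.Ioi 1) := by
  have h1 : IntegrableOn g (Set.Ioc 1 M) :=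
    ((hg.mono (Set.Icc_subset_Ici_self)).integrableOn_Icc).mono_set Set.Ioc_subset_Icc_self
  have h2 : IntegrableOn g (Set.Ioi M) :=
    (integrableOn_zero).congr_fun (fun y hy => (h0 y (le_of_lt hy)).symm) measurableSet_Ioi
  have := h1.union h2
  rwa [Set.Ioc_union_Ioi_eq_Ioi hM] at this

theorem stmt14 (d : ℕ) (hd : 3 ≤ d) (α : ℝ) (hα : α = ((d : ℝ) - 2) / 2) :
    ∃ C ≥ 0, ∀ f : ℝ → ℝ, ContDiff ℝ (⊤ : ℕ∞) f → HasCompactSupport f →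
      ∫ y in Set.Ioi (1 : ℝ), (deriv f y) ^ 2 * y ^ ((d : ℝ) - 1 - 2 * α)
        ≥ (1 / 4) *
            (∫ y in Set.Ioi (1 : ℝ),
              (f y) ^ 2 * y ^ ((d : ℝ) - 3 - 2 * α) / (1 + Real.log y) ^ 2)
          - C * (f 1) ^ 2 := by
  refine ⟨1/2, by norm_num, fun f hf hsupp => ?_⟩
  have e1 : (d : ℝ) - 1 - 2 * α = 1 := by rw [hα]; ring
  have e2 : (d : ℝ) - 3 - 2 * α = -1 := by rw [hα]; ring
  -- basic facts
  have hfc : Continuous f := hf.continuous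
  have hf'c : Continuous (deriv f) := hf.continuous_deriv (by simp)
  have hder : ∀ y, HasDerivAt f (deriv f y) y := fun y =>
    ((hf.differentiable (by simp)) y).hasDerivAt
  -- support bound
  obtain ⟨M, hM1, hM0⟩ : ∃ M, 1 ≤ M ∧ ∀ y, M ≤ y → f y = 0 ∧ deriv f y = 0 := by
    have hK : IsCompact (tsupport f ∪ tsupport (deriv f)) :=
      hsupp.union hsupp.deriv
    obtain ⟨M0, hM0⟩ := hK.bddAbove
    refine ⟨max M0 1 + 1, by simp [le_max_right], fun y hy => ?_⟩
    have hy' : y ∉ tsupport f ∪ tsupport (deriv f) := by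
      intro hmem
      have := hM0 hmem
      have : y ≤ max M0 1 := this.trans (le_max_left _ _)
      linarith
    exact ⟨image_eq_zero_of_notMem_tsupport (fun h => hy' (Or.inl h)),
      image_eq_zero_of_notMem_tsupport (fun h => hy' (Or.inr h))⟩
  -- weight
  set w : ℝ → ℝ := fun y => 1 + Real.log y with hw
  have hwpos : ∀ y ∈ Set.Ici (1:ℝ), 0 < w y := fun y hy => by
    have := Real.log_nonneg hy
    simp only [hw]; linarith
  have hwc : ContinuousOn w (Set.Ici 1) := by
    apply continuousOn_const.add
    exact Real.continuousOn_log.mono (fun y hy => by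
      simp only [Set.mem_compl_iff, Set.mem_singleton_iff]
      intro h; rw [h] at hy; simp at hy; linarith)
  -- the three integrands
  set A : ℝ → ℝ := fun y => (deriv f y) ^ 2 * y with hA
  set B : ℝ → ℝ := fun y => f y * deriv f y / w y with hB
  set Cc : ℝ → ℝ := fun y => (f y) ^ 2 / (y * (w y) ^ 2) with hCc
  have hAint : IntegrableOn A (Set.Ioi 1) := by
    refine aux_int14 ((hf'c.pow 2).continuousOn.mul continuousOn_id) hM1 (fun y hy => ?_)
    simp [hA, (hM0 y hy).2]
  have hBint : IntegrableOn B (Set.Ioi 1) := by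
    refine aux_int14 (((hfc.mul hf'c).continuousOn).div hwc
      (fun y hy => (hwpos y hy).ne')) hM1 (fun y hy => ?_)
    simp [hB, (hM0 y hy).1]
  have hCint : IntegrableOn Cc (Set.Ioi 1) := by
    refine aux_int14 (((hfc.pow 2).continuousOn).div
      (continuousOn_id.mul (hwc.pow 2))
      (fun y hy => ?_)) hM1 (fun y hy => ?_)
    · have h1 : (0:ℝ) < y := lt_of_lt_of_le one_pos hy
      have h2 := hwpos y hy
      positivity
    · simp [hCc, (hM0 y hy).1]
  -- integration by parts: ∫ (B - Cc/2) = -(f 1)^2/2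
  have ibp : ∫ y in Set.Ioi (1:ℝ), (B y - Cc y / 2) = 0 - (f 1)^2 / 2 := by
    have hGc : ContinuousOn (fun y => (f y)^2 / (2 * w y)) (Set.Ici 1) :=
      ((hfc.pow 2).continuousOn).div (continuousOn_const.mul hwc)
        (fun y hy => by have := hwpos y hy; positivity)
    have hGd : ∀ y ∈ Set.Ioi (1:ℝ), HasDerivAt (fun y => (f y)^2 / (2 * w y))
        (B y - Cc y / 2) y := by
      intro y hy
      have hy1 : (1:ℝ) < y := hy
      have hy0 : y ≠ 0 := by linarith
      have hwy : 0 < w y := hwpos y (le_of_lt hy1)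
      have hnum : HasDerivAt (fun y => (f y)^2) (2 * f y * deriv f y) y := by
        have := (hder y).fun_pow 2
        simpa [mul_comm, mul_assoc, mul_left_comm] using this
      have hden : HasDerivAt (fun y => 2 * w y) (2 * y⁻¹) y := by
        have : HasDerivAt w y⁻¹ y := (Real.hasDerivAt_log hy0).const_add 1
        exact this.const_mul 2
      have := hnum.fun_div hden (by positivity)
      refine this.congr_deriv (Eq.symm ?_)
      show f y * deriv f y / w y - f y ^ 2 / (y * w y ^ 2) / 2 = _
      field_simp
    have hGt : Tendsto (fun y => (f y)^2 / (2 * w y)) atTop (nhds 0) := by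
      apply Tendsto.congr' _ tendsto_const_nhds
      filter_upwards [Filter.eventually_ge_atTop M] with y hy
      simp [(hM0 y hy).1]
    have hint : IntegrableOn (fun y => B y - Cc y / 2) (Set.Ioi 1) :=
      hBint.sub (hCint.div_const 2)
    have := MeasureTheory.integral_Ioi_of_hasDerivAt_of_tendsto (hGc 1 Set.self_mem_Ici) hGd hint hGt
    rw [this]
    have : w 1 = 1 := by simp [hw]
    rw [this]; ring
  -- nonnegativity of the square
  have hsq : (0:ℝ) ≤ ∫ y in Set.Ioi (1:ℝ), (A y - B y + Cc y / 4) := by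
    apply MeasureTheory.setIntegral_nonneg measurableSet_Ioi
    intro y hy
    have hy1 : (1:ℝ) < y := hy
    have hy0 : (0:ℝ) < y := by linarith
    have hwy : 0 < w y := hwpos y (le_of_lt hy1)
    have key : A y - B y + Cc y / 4
        = (deriv f y - f y / (2 * y * w y))^2 * y := by
      simp only [hA, hB, hCc]
      field_simp
      ring
    rw [key]; positivity
  -- split the integrals
  have hIA := MeasureTheory.integral_sub hBint (hCint.div_const 2)
  rw [hIA] at ibp
  have hsplit : ∫ y in Set.Ioi (1:ℝ), (A y - B y + Cc y / 4)
      = (∫ y in Set.Ioi (1:ℝ), A y) - (∫ y in Set.Ioi (1:ℝ), B y)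
        + (∫ y in Set.Ioi (1:ℝ), Cc y) / 4 := by
    have h1 := MeasureTheory.integral_add (μ := volume.restrict (Set.Ioi 1))
      (hAint.sub hBint) (hCint.div_const 4)
    simp only [Pi.sub_apply] at h1
    rw [h1, MeasureTheory.integral_sub hAint hBint, MeasureTheory.integral_div]
  rw [hsplit] at hsq
  rw [MeasureTheory.integral_div] at ibp
  -- identify the stated integrals
  have hL : ∫ y in Set.Ioi (1:ℝ), (deriv f y) ^ 2 * y ^ ((d : ℝ) - 1 - 2 * α)
      = ∫ y in Set.Ioi (1:ℝ), A y := by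
    rw [e1]
    refine MeasureTheory.setIntegral_congr_fun measurableSet_Ioi (fun y hy => ?_)
    simp [hA, Real.rpow_one]
  have hR : ∫ y in Set.Ioi (1:ℝ),
      (f y) ^ 2 * y ^ ((d : ℝ) - 3 - 2 * α) / (1 + Real.log y) ^ 2
      = ∫ y in Set.Ioi (1:ℝ), Cc y := by
    rw [e2]
    refine MeasureTheory.setIntegral_congr_fun measurableSet_Ioi (fun y hy => ?_)
    have hy1 : (1:ℝ) < y := hy
    have hy0 : (0:ℝ) < y := by linarith
    have hwy : 0 < w y := hwpos y (le_of_lt hy1)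
    have : y ^ (-1 : ℝ) = y⁻¹ := by
      rw [show (-1:ℝ) = ((-1:ℤ):ℝ) by norm_num, Real.rpow_intCast, zpow_neg_one]
    rw [this]
    simp only [hCc, hw]
    field_simp
  rw [hL, hR]
  linarith
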